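/- Let n ≥ 1, let F be the normalized DFT matrix with entries F_{jk} = e^{2πi jk/n}/√n, and for t ∈ ℝ let γ(t) = F D(t) F* where D(t) = diag(e^{2πikt/n})_{k=0}^{n-1}. Then for every t ∈ ℝ, perm(γ(1−t)) = conj(perm(γ(t))). In particular |perm(γ(1−t))| = |perm(γ(t))|, i.e., the function f(t) = −(1/n) ln|perm(γ(t))| satisfies f(t) = f(1−t). -/

import Mathlib

open Matrix

/-- The normalized DFT matrix: `F_{jk} = e^{2πi jk/n}/√n`. -/
noncomputable def dftMatrix (n : ℕ) : Matrix (Fin n) (Fin n) ℂ :=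
  Matrix.of fun j k : Fin n =>
    Complex.exp (2 * (Real.pi : ℂ) * Complex.I * ((j : ℕ) : ℂ) * ((k : ℕ) : ℂ) / (n : ℂ)) /
      ((Real.sqrt n : ℝ) : ℂ)

/-- The geodesic on `U(n)` from the identity to the n-cycle permutation matrix:
`γ(t) = F D(t) F*` with `D(t) = diag(e^{2πikt/n})`. -/
noncomputable def cycleGeodesic (n : ℕ) (t : ℝ) : Matrix (Fin n) (Fin n) ℂ :=
  dftMatrix n *
    Matrix.diagonal (fun k : Fin n =>
      Complex.exp (2 * (Real.pi : ℂ) * Complex.I * ((k : ℕ) : ℂ) * (t : ℂ) / (n : ℂ))) *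
    (dftMatrix n)ᴴ

/-!
`γ(t)` is circulant: `γ(t)_{jl} = κ(j - l + t)` with `κ(x) = n⁻¹ ∑ₖ e^{2πikx/n}`, and `κ` is
`n`-periodic with `conj κ(x) = κ(-x)`. Hence `γ(1-t)_{jl} = conj γ(t)_{l,j+1}`: `γ(1-t)` is `γ(t)*`
with its rows cyclically shifted. The permanent ignores row permutations and turns `A*` into the
conjugate of `perm A`.
-/

open Complex
open scoped Real ComplexConjugate

theorem Matrix.permanent_conjTranspose {n R : Type*} [Fintype n] [DecidableEq n] [CommSemiring R]
    [StarRing R] (A : Matrix n n R) : Aᴴ.permanent = star A.permanent := by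
  rw [conjTranspose, transpose_map, permanent_transpose]
  simp [permanent, star_sum, star_prod]

lemma exp_two_pi_I_mul_add_int_mul_div (n k : ℕ) (m : ℤ) (x : ℝ) :
    exp (2 * π * I * k * ↑(x + m * n) / n) = exp (2 * π * I * k * x / n) := by
  rcases eq_or_ne n 0 with rfl | hn
  · simp
  rw [exp_eq_exp_iff_exists_int]
  refine ⟨k * m, ?_⟩
  push_cast
  field_simp

noncomputable def cycleGeodesicKernel (n : ℕ) (x : ℝ) : ℂ :=
  (n : ℂ)⁻¹ * ∑ k : Fin n, exp (2 * π * I * (k : ℕ) * x / n)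

lemma cycleGeodesicKernel_add_int_mul (n : ℕ) (x : ℝ) (m : ℤ) :
    cycleGeodesicKernel n (x + m * n) = cycleGeodesicKernel n x := by
  simp only [cycleGeodesicKernel, exp_two_pi_I_mul_add_int_mul_div]

lemma conj_cycleGeodesicKernel (n : ℕ) (x : ℝ) :
    conj (cycleGeodesicKernel n x) = cycleGeodesicKernel n (-x) := by
  simp only [cycleGeodesicKernel, map_mul, map_inv₀, map_natCast, map_sum, ← Complex.exp_conj]
  congr! 3 with k
  simp only [map_mul, map_div₀, map_ofNat, map_natCast, conj_ofReal, conj_I, ofReal_neg]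
  ring

lemma cycleGeodesic_apply (n : ℕ) (t : ℝ) (j l : Fin n) :
    cycleGeodesic n t j l = cycleGeodesicKernel n ((j : ℕ) - (l : ℕ) + t) := by
  have hs : ((√n : ℝ) : ℂ) * ((√n : ℝ) : ℂ) = n := by
    rw [← ofReal_mul, Real.mul_self_sqrt n.cast_nonneg, ofReal_natCast]
  rw [cycleGeodesic, mul_apply, cycleGeodesicKernel, Finset.mul_sum]
  refine Finset.sum_congr rfl fun k _ => ?_
  simp only [mul_diagonal, conjTranspose_apply, dftMatrix, of_apply, star_div₀, Complex.star_def,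
    ← Complex.exp_conj, map_mul, map_div₀, map_ofNat, map_natCast, conj_ofReal, conj_I]
  rw [div_mul_eq_mul_div, mul_div_assoc', div_mul_eq_mul_div, div_div, hs, ← Complex.exp_add,
    ← Complex.exp_add, inv_mul_eq_div]
  congr 2
  push_cast
  ring

lemma exists_val_finRotate_eq {n : ℕ} (j : Fin n) :
    ∃ m : ℤ, ((finRotate n j : ℕ) : ℝ) = (j : ℕ) + 1 + m * n := by
  obtain _ | n := n
  · exact j.elim0
  rw [coe_finRotate]
  split_ifs with h
  · exact ⟨-1, by simp [h]⟩
  · exact ⟨0, by simp⟩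

lemma cycleGeodesic_one_sub (n : ℕ) (t : ℝ) :
    cycleGeodesic n (1 - t) = ((cycleGeodesic n t)ᴴ).submatrix (finRotate n) id := by
  ext j l
  obtain ⟨m, hm⟩ := exists_val_finRotate_eq j
  rw [submatrix_apply, id_eq, conjTranspose_apply, cycleGeodesic_apply, cycleGeodesic_apply,
    Complex.star_def, conj_cycleGeodesicKernel, hm, ← cycleGeodesicKernel_add_int_mul n _ m]
  congr 1
  ring

theorem permanent_cycleGeodesic_symm_general (n : ℕ) (t : ℝ) :
    (cycleGeodesic n (1 - t)).permanent = starRingEnd ℂ (cycleGeodesic n t).permanent ∧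
      ‖(cycleGeodesic n (1 - t)).permanent‖
        = ‖(cycleGeodesic n t).permanent‖ := by
  have h : (cycleGeodesic n (1 - t)).permanent = conj (cycleGeodesic n t).permanent := by
    rw [cycleGeodesic_one_sub, permanent_permute_cols, permanent_conjTranspose, Complex.star_def]
  exact ⟨h, by rw [h, Complex.norm_conj]⟩

/-- `perm(γ(1−t)) = conj(perm(γ(t)))`; in particular the magnitudes agree. -/
theorem permanent_cycleGeodesic_symm (n : ℕ) (hn : 1 ≤ n) (t : ℝ) :
    (cycleGeodesic n (1 - t)).permanent = starRingEnd ℂ (cycleGeodesic n t).permanent ∧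
      ‖(cycleGeodesic n (1 - t)).permanent‖
        = ‖(cycleGeodesic n t).permanent‖ :=
  permanent_cycleGeodesic_symm_general n t
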